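/- arXiv:1707.02602 — 3 statements merged into one kernel-verified Lean document; each statement's English description precedes it below -/
import Mathlib

section
/- If Δ ⊂ ℝ² is a 2-dimensional lattice polytope, then the Fine interior Δ^{FI} equals the convex hull of the interior lattice points of Δ. In particular, if Δ has no interior lattice points, then Δ^{FI} is empty. -/
open Finset Pointwise MeasureTheory
noncomputable section

variable {d : ℕ}

/-- Standard pairing on ℝ^d. -/
def pairR (x y : Fin d → ℝ) : ℝ := ∑ i, x i * y i

/-- Embedding of ℤ^d into ℝ^d. -/
def toR (n : Fin d → ℤ) : Fin d → ℝ := fun i => (n i : ℝ)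

/-- A point of ℝ^d with integer coordinates. -/
def IsLatticePoint (x : Fin d → ℝ) : Prop := ∀ i, ∃ z : ℤ, x i = (z : ℝ)

/-- ord_Δ(y) = min_{x ∈ Δ} ⟨x, y⟩. -/
def ordP (Δ : Set (Fin d → ℝ)) (y : Fin d → ℝ) : ℝ := sInf ((fun x => pairR x y) '' Δ)

/-- The Fine interior of Δ. -/
def fineInterior (Δ : Set (Fin d → ℝ)) : Set (Fin d → ℝ) :=
  {x | ∀ n : Fin d → ℤ, n ≠ 0 → ordP Δ (toR n) + 1 ≤ pairR x (toR n)}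

/-- A lattice polytope: the convex hull of finitely many lattice points. -/
def IsLatticePolytope (Δ : Set (Fin d → ℝ)) : Prop :=
  ∃ S : Finset (Fin d → ℤ), Δ = convexHull ℝ (toR '' (S : Set (Fin d → ℤ)))

/-- The polar set Δ* = {y : ⟨x,y⟩ ≥ -1 for all x ∈ Δ}. -/
def polarSet (Δ : Set (Fin d → ℝ)) : Set (Fin d → ℝ) :=
  {y | ∀ x ∈ Δ, -1 ≤ pairR x y}

/-- [P] = convex hull of the lattice points of P. -/
def latticeHull (P : Set (Fin d → ℝ)) : Set (Fin d → ℝ) :=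
  convexHull ℝ {x ∈ P | IsLatticePoint x}

/-- Pseudoreflexive polytope: Fine interior {0} and Δ = [[Δ*]*]. -/
def IsPseudoreflexive (Δ : Set (Fin d → ℝ)) : Prop :=
  IsLatticePolytope Δ ∧ fineInterior Δ = {0} ∧
    Δ = latticeHull (polarSet (latticeHull (polarSet Δ)))

/-- (Exposed) face of Δ cut out by a supporting linear functional. -/
def IsFaceOf (Δ F : Set (Fin d → ℝ)) : Prop :=
  ∃ y : Fin d → ℝ, F = {x ∈ Δ | pairR x y = ordP Δ y}

/-- Dimension of a subset of ℝ^d. -/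
def dimSet (S : Set (Fin d → ℝ)) : ℕ := Module.finrank ℝ ↥(vectorSpan ℝ S)

/-- The face of the polar polytope dual to a face F of Δ. -/
def dualFace (Δ F : Set (Fin d → ℝ)) : Set (Fin d → ℝ) :=
  {y ∈ polarSet Δ | ∀ x ∈ F, pairR x y = -1}

/-- The cone ℝ_{≥0}·Θ over a set Θ. -/
def coneOver (Θ : Set (Fin d → ℝ)) : Set (Fin d → ℝ) :=
  {x | ∃ c : ℝ, 0 ≤ c ∧ ∃ p ∈ Θ, x = c • p}

/-- A face Θ is ordinary if every lattice point of ℝ_{≥0}Θ lies in some dilate lΘ. -/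
def IsOrdinaryFace (Θ : Set (Fin d → ℝ)) : Prop :=
  ∀ n : Fin d → ℤ, toR n ∈ coneOver Θ → ∃ l : ℕ, toR n ∈ (l : ℝ) • Θ

/-- Facet: a face of dimension d-1. -/
def IsFacet (Δ Θ : Set (Fin d → ℝ)) : Prop :=
  IsFaceOf Δ Θ ∧ dimSet Θ + 1 = d

/-
An interior lattice point `a` lies in `Δ^FI`: `ord_Δ(n)` and `⟨a, n⟩` are integers and
`⟨a, n⟩ > ord_Δ(n)`. Conversely, `Δ^FI` is compact, convex and contained in the interior of `Δ`
(at a boundary point `x` with supporting normal `c`, the sublinear slack `y ↦ ⟨x, y⟩ - ord_Δ(y)`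
vanishes on the ray `ℝ₊c` and so is `< 1` at lattice points close to that ray), so by
Krein–Milman it suffices to show that its extreme points are lattice points. Near an interior
point only finitely many of the defining inequalities matter, hence an extreme point `v` has two
independent active directions `n₁, n₂`, i.e. `⟨v, nᵢ⟩ = ord_Δ(nᵢ) + 1`. As the slack at `v` is
sublinear and `≥ 1` on nonzero lattice points, every nonzero lattice point of the triangle
`0, n₁, n₂` lies on the edge `[n₁, n₂]` and is active there; for an active pair of minimal
determinant this forces `det(n₁, n₂) = 1`, and `v` solves a unimodular integer linear system.
-/

lemma mem_fineInterior_iff {Δ : Set (Fin d → ℝ)} {x : Fin d → ℝ} :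
    x ∈ fineInterior Δ ↔ ∀ n : Fin d → ℤ, n ≠ 0 → ordP Δ (toR n) + 1 ≤ x ⬝ᵥ toR n :=
  Iff.rfl

lemma isLatticePoint_iff {x : Fin d → ℝ} : IsLatticePoint x ↔ ∃ n, toR n = x := by
  refine ⟨fun h => ?_, ?_⟩
  · choose n hn using h
    exact ⟨n, funext fun i => (hn i).symm⟩
  · rintro ⟨n, rfl⟩ i
    exact ⟨n i, rfl⟩

lemma toR_ne_zero {n : Fin d → ℤ} (hn : n ≠ 0) : toR n ≠ 0 := fun h =>
  hn (funext fun i => by simpa [toR] using congrFun h i)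

lemma isLinearMap_dotProduct_left (y : Fin d → ℝ) : IsLinearMap ℝ fun x : Fin d → ℝ => x ⬝ᵥ y :=
  ⟨fun a b => add_dotProduct a b y, fun c a => smul_dotProduct c a y⟩

lemma toR_dotProduct_toR (a n : Fin d → ℤ) : toR a ⬝ᵥ toR n = ((a ⬝ᵥ n : ℤ) : ℝ) := by
  simp [toR, dotProduct]

lemma ContinuousLinearMap.apply_eq_dotProduct (f : (Fin d → ℝ) →L[ℝ] ℝ) (z : Fin d → ℝ) :
    f z = z ⬝ᵥ fun i => f (Pi.single i 1) := by
  have h := f.toLinearMap.pi_apply_eq_sum_univ z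
  simp only [ContinuousLinearMap.coe_coe, smul_eq_mul] at h
  rw [h, dotProduct]
  congr! with i
  simp [Pi.single_apply, eq_comm]

lemma exists_nsmul_dist_toR_lt (c : Fin d → ℝ) {r : ℝ} (hr : 0 < r) :
    ∃ k : ℕ, 0 < k ∧ ∃ n : Fin d → ℤ, dist ((k : ℝ) • c) (toR n) < r := by
  set u : ℕ → Fin d → ℝ := fun m i => Int.fract (m * c i)
  have hu : ∀ m, u m ∈ Set.Icc 0 1 := fun m =>
    ⟨fun i => Int.fract_nonneg _, fun i => (Int.fract_lt_one _).le⟩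
  obtain ⟨_, -, φ, hφ, hlim⟩ := isCompact_Icc.tendsto_subseq hu
  obtain ⟨N, hN⟩ := Metric.cauchySeq_iff'.1 hlim.cauchySeq r hr
  refine ⟨φ (N + 1) - φ N, Nat.sub_pos_of_lt (hφ N.lt_succ_self),
    fun i => ⌊φ (N + 1) * c i⌋ - ⌊φ N * c i⌋, ?_⟩
  have hdiff : ((φ (N + 1) - φ N : ℕ) : ℝ) • c - toR (fun i => ⌊φ (N + 1) * c i⌋ - ⌊φ N * c i⌋)
      = u (φ (N + 1)) - u (φ N) := by
    funext i
    simp only [u, toR, Int.fract, Pi.sub_apply, Pi.smul_apply, smul_eq_mul,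
      Nat.cast_sub (hφ N.lt_succ_self).le, Int.cast_sub]
    ring
  rw [dist_eq_norm, hdiff, ← dist_eq_norm]
  exact hN (N + 1) N.le_succ

lemma finite_setOf_isLatticePoint {s : Set (Fin d → ℝ)} (hs : Bornology.IsBounded s) :
    {x ∈ s | IsLatticePoint x}.Finite := by
  obtain ⟨R, hR⟩ := hs.subset_closedBall 0
  refine ((Set.Finite.pi fun _ => Set.finite_Icc (-⌈R⌉) ⌈R⌉).image toR).subset ?_
  rintro x ⟨hx, hxZ⟩
  obtain ⟨n, rfl⟩ := isLatticePoint_iff.1 hxZ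
  refine ⟨n, fun i _ => ?_, rfl⟩
  have hi : |(n i : ℝ)| ≤ R :=
    (norm_le_pi_norm (toR n) i).trans (by simpa using hR hx)
  rw [Set.mem_Icc, ← abs_le]
  exact_mod_cast hi.trans (Int.le_ceil R)

abbrev latticePolytope (S : Finset (Fin d → ℤ)) : Set (Fin d → ℝ) :=
  convexHull ℝ (toR '' (S : Set (Fin d → ℤ)))

section LatticePolytope

variable {S : Finset (Fin d → ℤ)}

lemma isCompact_latticePolytope (S : Finset (Fin d → ℤ)) : IsCompact (latticePolytope S) :=
  (S.finite_toSet.image toR).isCompact_convexHull ℝ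

lemma nonempty_of_interior_latticePolytope_nonempty (h : (interior (latticePolytope S)).Nonempty) :
    S.Nonempty :=
  Finset.nonempty_iff_ne_empty.2 fun hS => by simp [hS, latticePolytope] at h

lemma exists_dotProduct_le_of_mem_latticePolytope {x : Fin d → ℝ} (hx : x ∈ latticePolytope S)
    (y : Fin d → ℝ) : ∃ s ∈ S, toR s ⬝ᵥ y ≤ x ⬝ᵥ y := by
  obtain ⟨-, ⟨s, hs, rfl⟩, hsx⟩ :=
    ((isLinearMap_dotProduct_left y).mk' _).concaveOn convex_univ |>.exists_le_of_mem_convexHull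
      (Set.subset_univ _) hx
  exact ⟨s, hs, hsx⟩

lemma ordP_latticePolytope (hS : S.Nonempty) (y : Fin d → ℝ) :
    ordP (latticePolytope S) y = S.inf' hS fun s => toR s ⬝ᵥ y := by
  have hlower : ∀ b ∈ (· ⬝ᵥ y) '' latticePolytope S, S.inf' hS (fun s => toR s ⬝ᵥ y) ≤ b := by
    rintro - ⟨x, hx, rfl⟩
    obtain ⟨s, hs, hsx⟩ := exists_dotProduct_le_of_mem_latticePolytope hx y
    exact (Finset.inf'_le _ hs).trans hsx
  obtain ⟨s, hs, hmin⟩ := Finset.exists_mem_eq_inf' hS fun s => toR s ⬝ᵥ y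
  have hmem : toR s ⬝ᵥ y ∈ (· ⬝ᵥ y) '' latticePolytope S :=
    ⟨toR s, subset_convexHull ℝ _ ⟨s, hs, rfl⟩, rfl⟩
  refine le_antisymm ?_ (le_csInf ⟨_, hmem⟩ hlower)
  rw [hmin]
  exact csInf_le ⟨_, hlower⟩ hmem

lemma ordP_le_dotProduct (hS : S.Nonempty) {x : Fin d → ℝ} (hx : x ∈ latticePolytope S)
    (y : Fin d → ℝ) : ordP (latticePolytope S) y ≤ x ⬝ᵥ y := by
  obtain ⟨s, hs, hsx⟩ := exists_dotProduct_le_of_mem_latticePolytope hx y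
  rw [ordP_latticePolytope hS]
  exact (Finset.inf'_le _ hs).trans hsx

lemma exists_ordP_toR_eq_intCast (hS : S.Nonempty) (n : Fin d → ℤ) :
    ∃ k : ℤ, ordP (latticePolytope S) (toR n) = k := by
  obtain ⟨s, -, hs⟩ := Finset.exists_mem_eq_inf' hS fun s => toR s ⬝ᵥ toR n
  exact ⟨s ⬝ᵥ n, by rw [ordP_latticePolytope hS, hs]; simp [toR, dotProduct]⟩

lemma continuous_ordP_latticePolytope (hS : S.Nonempty) :
    Continuous (ordP (latticePolytope S)) := by
  simp_rw [funext (ordP_latticePolytope hS)]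
  exact Continuous.finset_inf'_apply hS fun s _ => continuous_const.dotProduct continuous_id

lemma smul_ordP_add_smul_ordP_le (hS : S.Nonempty) {a b : ℝ} (ha : 0 ≤ a) (hb : 0 ≤ b)
    (y₁ y₂ : Fin d → ℝ) :
    a * ordP (latticePolytope S) y₁ + b * ordP (latticePolytope S) y₂
      ≤ ordP (latticePolytope S) (a • y₁ + b • y₂) := by
  simp only [ordP_latticePolytope hS]
  refine Finset.le_inf' hS _ fun s hs => ?_
  rw [dotProduct_add, dotProduct_smul, dotProduct_smul, smul_eq_mul, smul_eq_mul]
  gcongr <;> exact Finset.inf'_le _ hs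

end LatticePolytope

section FineInterior

lemma fineInterior_eq_iInter (Δ : Set (Fin d → ℝ)) :
    fineInterior Δ = ⋂ (n : Fin d → ℤ) (_ : n ≠ 0), {x | ordP Δ (toR n) + 1 ≤ x ⬝ᵥ toR n} := by
  ext x
  simp [mem_fineInterior_iff]

lemma convex_fineInterior (Δ : Set (Fin d → ℝ)) : Convex ℝ (fineInterior Δ) := by
  rw [fineInterior_eq_iInter]
  exact convex_iInter₂ fun n _ => convex_halfSpace_ge (isLinearMap_dotProduct_left _) _

lemma isClosed_fineInterior (Δ : Set (Fin d → ℝ)) : IsClosed (fineInterior Δ) := by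
  rw [fineInterior_eq_iInter]
  exact isClosed_biInter fun n _ =>
    isClosed_le continuous_const (continuous_id.dotProduct continuous_const)

variable {S : Finset (Fin d → ℤ)}

lemma ordP_add_mul_sum_abs_le (hS : S.Nonempty) {x : Fin d → ℝ} {ε δ : ℝ}
    (hball : Metric.ball x ε ⊆ latticePolytope S) (hδ : 0 ≤ δ) (hδε : δ < ε) (y : Fin d → ℝ) :
    ordP (latticePolytope S) y + δ * ∑ i, |y i| ≤ x ⬝ᵥ y := by
  set σ : Fin d → ℝ := fun i => if 0 ≤ y i then 1 else -1
  have hσy : σ ⬝ᵥ y = ∑ i, |y i| := Finset.sum_congr rfl fun i _ => by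
    by_cases h : 0 ≤ y i <;> simp [σ, h, abs_of_nonneg, abs_of_neg, not_le.1]
  have hσ : ‖σ‖ ≤ 1 := (pi_norm_le_iff_of_nonneg zero_le_one).2 fun i => by
    by_cases h : 0 ≤ y i <;> simp [σ, h]
  have hz : x - δ • σ ∈ Metric.ball x ε := by
    rw [Metric.mem_ball, dist_eq_norm, sub_sub_cancel_left, norm_neg, norm_smul,
      Real.norm_of_nonneg hδ]
    nlinarith
  have := ordP_le_dotProduct hS (hball hz) y
  rw [sub_dotProduct, smul_dotProduct, hσy, smul_eq_mul] at this
  linarith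

lemma mem_fineInterior_of_mem_interior (hS : S.Nonempty) {x : Fin d → ℝ}
    (hx : x ∈ interior (latticePolytope S)) (hxZ : IsLatticePoint x) :
    x ∈ fineInterior (latticePolytope S) := by
  obtain ⟨ε, hε, hball⟩ := Metric.isOpen_iff.1 isOpen_interior x hx
  obtain ⟨a, rfl⟩ := isLatticePoint_iff.1 hxZ
  rw [mem_fineInterior_iff]
  intro n hn
  obtain ⟨i, hi⟩ := Function.ne_iff.1 (toR_ne_zero hn)
  have hpos : 0 < ∑ i, |toR n i| :=
    Finset.sum_pos' (fun i _ => abs_nonneg _) ⟨i, Finset.mem_univ i, abs_pos.2 hi⟩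
  have hslack := ordP_add_mul_sum_abs_le hS (hball.trans interior_subset) (half_pos hε).le
    (half_lt_self hε) (toR n)
  obtain ⟨k, hk⟩ := exists_ordP_toR_eq_intCast hS n
  rw [hk, toR_dotProduct_toR] at hslack ⊢
  have hlt : k < a ⬝ᵥ n := by exact_mod_cast (lt_add_of_pos_right _ (by positivity)).trans_le hslack
  exact_mod_cast Int.add_one_le_of_lt hlt

lemma notMem_fineInterior_of_dotProduct_le_ordP (hS : S.Nonempty) {x c : Fin d → ℝ}
    (hc : c ≠ 0) (hxc : x ⬝ᵥ c ≤ ordP (latticePolytope S) c) :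
    x ∉ fineInterior (latticePolytope S) := by
  intro hx
  have hcont : Continuous fun y => x ⬝ᵥ y - ordP (latticePolytope S) y :=
    (continuous_const.dotProduct continuous_id).sub (continuous_ordP_latticePolytope hS)
  obtain ⟨r, hr, hsmall⟩ := Metric.eventually_nhds_iff.1
    (hcont.continuousAt.eventually_lt (continuousAt_const (y := (1 : ℝ)) (x := 0))
      (by simp [ordP_latticePolytope hS]))
  obtain ⟨i, hi⟩ := Function.ne_iff.1 hc
  obtain ⟨k, hk, n, hn⟩ := exists_nsmul_dist_toR_lt c (lt_min hr (abs_pos.2 hi))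
  have hn0 : n ≠ 0 := by
    rintro rfl
    have h1 : |(k : ℝ) * c i| < |c i| := by
      simpa [toR] using ((dist_le_pi_dist _ _ i).trans_lt hn).trans_le (min_le_right _ _)
    have h2 : |c i| ≤ |(k : ℝ) * c i| := by
      rw [abs_mul, Nat.abs_cast]
      exact le_mul_of_one_le_left (abs_nonneg _) (by exact_mod_cast hk)
    exact h1.not_ge h2
  set u := toR n - (k : ℝ) • c
  have hu : x ⬝ᵥ u - ordP (latticePolytope S) u < 1 :=
    hsmall (by
      rw [dist_zero_right, ← norm_neg, neg_sub, ← dist_eq_norm]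
      exact hn.trans_le (min_le_left _ _))
  have hconc := smul_ordP_add_smul_ordP_le hS k.cast_nonneg zero_le_one c u
  rw [one_smul, one_mul, add_sub_cancel] at hconc
  have hxn : x ⬝ᵥ toR n = k * (x ⬝ᵥ c) + x ⬝ᵥ u := by
    rw [← smul_eq_mul, ← dotProduct_smul, ← dotProduct_add, add_sub_cancel]
  have := mem_fineInterior_iff.1 hx n hn0
  linarith [mul_le_mul_of_nonneg_left hxc (k.cast_nonneg : (0 : ℝ) ≤ k)]

lemma fineInterior_subset_interior (hint : (interior (latticePolytope S)).Nonempty) :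
    fineInterior (latticePolytope S) ⊆ interior (latticePolytope S) := by
  have hS := nonempty_of_interior_latticePolytope_nonempty hint
  intro x hx
  by_contra hxi
  obtain ⟨f, hf⟩ :=
    geometric_hahn_banach_open_point (convex_convexHull ℝ _).interior isOpen_interior hxi
  set c : Fin d → ℝ := -fun i => f (Pi.single i 1)
  have hfc : ∀ z, f z = -(z ⬝ᵥ c) := fun z => by
    rw [f.apply_eq_dotProduct, dotProduct_neg, neg_neg]
  have hc : c ≠ 0 := fun h => by
    obtain ⟨a, ha⟩ := hint
    simpa [hfc, h] using hf a ha
  have hsupport : latticePolytope S ⊆ {z | x ⬝ᵥ c ≤ z ⬝ᵥ c} := by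
    refine subset_closure.trans ?_
    rw [← (convex_convexHull ℝ _).closure_interior_eq_closure_of_nonempty_interior hint]
    refine closure_minimal (fun a ha => ?_)
      (isClosed_le continuous_const (continuous_id.dotProduct continuous_const))
    have := hf a ha
    rw [hfc, hfc, neg_lt_neg_iff] at this
    exact this.le
  refine notMem_fineInterior_of_dotProduct_le_ordP hS hc ?_ hx
  rw [ordP_latticePolytope hS]
  exact Finset.le_inf' hS _ fun s hs => hsupport (subset_convexHull ℝ _ ⟨s, hs, rfl⟩)

lemma isCompact_fineInterior (hint : (interior (latticePolytope S)).Nonempty) :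
    IsCompact (fineInterior (latticePolytope S)) :=
  (isCompact_latticePolytope S).of_isClosed_subset (isClosed_fineInterior _)
    ((fineInterior_subset_interior hint).trans interior_subset)

lemma convexHull_subset_fineInterior (hS : S.Nonempty) :
    convexHull ℝ {x ∈ interior (latticePolytope S) | IsLatticePoint x}
      ⊆ fineInterior (latticePolytope S) :=
  convexHull_min (fun _ hx => mem_fineInterior_of_mem_interior hS hx.1 hx.2)
    (convex_fineInterior _)

end FineInterior

def IsActive (Δ : Set (Fin d → ℝ)) (x : Fin d → ℝ) (n : Fin d → ℤ) : Prop :=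
  n ≠ 0 ∧ x ⬝ᵥ toR n = ordP Δ (toR n) + 1

section Active

open Filter Topology

variable {S : Finset (Fin d → ℤ)}

lemma exists_finite_eventually_mem_fineInterior_iff (hS : S.Nonempty) {v : Fin d → ℝ}
    (hv : v ∈ interior (latticePolytope S)) :
    ∃ B : Set (Fin d → ℤ), B.Finite ∧ ∀ᶠ x in 𝓝 v, (x ∈ fineInterior (latticePolytope S) ↔
      ∀ n ∈ B, n ≠ 0 → ordP (latticePolytope S) (toR n) + 1 ≤ x ⬝ᵥ toR n) := by
  obtain ⟨ε, hε, hball⟩ := Metric.isOpen_iff.1 isOpen_interior v hv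
  set K : ℤ := ⌈4 / ε⌉
  refine ⟨Set.univ.pi fun _ => Set.Icc (-K) K, Set.Finite.pi fun _ => Set.finite_Icc _ _, ?_⟩
  filter_upwards [Metric.ball_mem_nhds v (half_pos hε)] with x hx
  refine ⟨fun h n _ hn => h n hn, fun h n hn => ?_⟩
  show _ ≤ x ⬝ᵥ toR n
  by_cases hnB : n ∈ Set.univ.pi fun _ => Set.Icc (-K) K
  · exact h n hnB hn
  simp only [Set.mem_pi, Set.mem_univ, true_implies, Set.mem_Icc, not_forall, ← abs_le,
    not_le] at hnB
  obtain ⟨i, hi⟩ := hnB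
  have hKi : 4 / ε < |toR n i| := by
    refine (Int.le_ceil _).trans_lt ?_
    simp only [toR]
    rw [← Int.cast_abs]
    exact_mod_cast hi
  have hxball : Metric.ball x (ε / 2) ⊆ Metric.ball v ε :=
    Metric.ball_subset_ball' (by rw [Metric.mem_ball] at hx; linarith)
  have hslack := ordP_add_mul_sum_abs_le (δ := ε / 4) hS
    (hxball.trans (hball.trans interior_subset)) (by positivity) (by linarith) (toR n)
  have hsum := Finset.single_le_sum (fun j _ => abs_nonneg (toR n j)) (Finset.mem_univ i)
  have : 1 < ε / 4 * |toR n i| := by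
    rw [div_lt_iff₀ hε] at hKi
    linarith
  nlinarith

lemma eventually_add_smul_mem_fineInterior (hS : S.Nonempty) {v w : Fin d → ℝ}
    (hv : v ∈ fineInterior (latticePolytope S)) (hvi : v ∈ interior (latticePolytope S))
    (hw : ∀ n, IsActive (latticePolytope S) v n → w ⬝ᵥ toR n = 0) :
    ∀ᶠ t in 𝓝 (0 : ℝ), v + t • w ∈ fineInterior (latticePolytope S) := by
  obtain ⟨B, hB, hloc⟩ := exists_finite_eventually_mem_fineInterior_iff hS hvi
  have hline : Tendsto (fun t : ℝ => v + t • w) (𝓝 0) (𝓝 v) :=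
    Continuous.tendsto' (by fun_prop) 0 v (by simp)
  have hB' : ∀ n ∈ B, ∀ᶠ t in 𝓝 (0 : ℝ),
      n ≠ 0 → ordP (latticePolytope S) (toR n) + 1 ≤ (v + t • w) ⬝ᵥ toR n := by
    intro n _
    by_cases hn : n = 0
    · exact Eventually.of_forall fun _ h => (h hn).elim
    by_cases hact : IsActive (latticePolytope S) v n
    · refine Eventually.of_forall fun t _ => ?_
      rw [add_dotProduct, smul_dotProduct, hw n hact, smul_zero, add_zero, hact.2]
    · have hlt : ordP (latticePolytope S) (toR n) + 1 < v ⬝ᵥ toR n :=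
        (mem_fineInterior_iff.1 hv n hn).lt_of_ne fun h => hact ⟨hn, h.symm⟩
      exact ((((continuous_id.dotProduct continuous_const).tendsto v).comp hline).eventually
        (lt_mem_nhds hlt)).mono fun t ht _ => ht.le
  filter_upwards [hline.eventually hloc, hB.eventually_all.2 hB'] with t ht hcons
  exact ht.2 hcons

lemma eq_zero_of_mem_extremePoints_fineInterior (hS : S.Nonempty) {v w : Fin d → ℝ}
    (hv : v ∈ Set.extremePoints ℝ (fineInterior (latticePolytope S)))
    (hvi : v ∈ interior (latticePolytope S))
    (hw : ∀ n, IsActive (latticePolytope S) v n → w ⬝ᵥ toR n = 0) : w = 0 := by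
  have h := eventually_add_smul_mem_fineInterior hS hv.1 hvi hw
  obtain ⟨r, hr, hball⟩ := Metric.eventually_nhds_iff.1
    (h.and ((continuous_neg.tendsto' (0 : ℝ) 0 neg_zero).eventually h))
  obtain ⟨h₁, h₂⟩ := hball (y := r / 2) (by
    rw [Real.dist_0_eq_abs, abs_of_pos (half_pos hr)]
    linarith)
  have hseg : v ∈ openSegment ℝ (v + (r / 2) • w) (v + (-(r / 2)) • w) :=
    ⟨1 / 2, 1 / 2, by norm_num, by norm_num, by norm_num, by module⟩
  have := hv.2 h₁ h₂ hseg
  rw [add_eq_left, smul_eq_zero] at this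
  exact this.resolve_left (half_pos hr).ne'

lemma IsActive.of_eq_smul_add_smul (hS : S.Nonempty) {v : Fin d → ℝ}
    (hv : v ∈ fineInterior (latticePolytope S)) {n₁ n₂ p : Fin d → ℤ}
    (h₁ : IsActive (latticePolytope S) v n₁) (h₂ : IsActive (latticePolytope S) v n₂)
    (hp : p ≠ 0) {a b : ℝ} (ha : 0 ≤ a) (hb : 0 ≤ b) (hab : a + b ≤ 1)
    (hcomb : toR p = a • toR n₁ + b • toR n₂) :
    a + b = 1 ∧ IsActive (latticePolytope S) v p := by
  have hconc := smul_ordP_add_smul_ordP_le hS ha hb (toR n₁) (toR n₂)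
  rw [← hcomb] at hconc
  have hvp : v ⬝ᵥ toR p = a * (v ⬝ᵥ toR n₁) + b * (v ⬝ᵥ toR n₂) := by
    rw [hcomb, dotProduct_add, dotProduct_smul, dotProduct_smul, smul_eq_mul, smul_eq_mul]
  rw [h₁.2, h₂.2] at hvp
  have hFI := mem_fineInterior_iff.1 hv p hp
  have hsum : a + b = 1 := by linarith
  exact ⟨hsum, hp, by linarith⟩

end Active

section Plane

def det2 (a b : Fin 2 → ℤ) : ℤ := a 0 * b 1 - a 1 * b 0

lemma det2_smul_eq (n₁ n₂ w : Fin 2 → ℤ) :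
    det2 n₁ n₂ • w = det2 w n₂ • n₁ + det2 n₁ w • n₂ := by
  funext i
  fin_cases i <;> simp [det2] <;> ring

lemma exists_not_dvd_det2 {n₁ n₂ : Fin 2 → ℤ} (hD : 2 ≤ det2 n₁ n₂) :
    ∃ w, ¬(det2 n₁ n₂ ∣ det2 w n₂ ∧ det2 n₁ n₂ ∣ det2 n₁ w) := by
  set D := det2 n₁ n₂ with hD_def
  -- otherwise every entry of `n₁` and `n₂` is divisible by `D`, so `D ^ 2 ∣ D`
  by_contra! h
  obtain ⟨⟨x₁, hx₁⟩, ⟨x₂, hx₂⟩⟩ := h ![1, 0]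
  obtain ⟨⟨y₁, hy₁⟩, ⟨y₂, hy₂⟩⟩ := h ![0, 1]
  simp only [det2, Matrix.cons_val_zero, Matrix.cons_val_one, Matrix.cons_val_fin_one, one_mul,
    zero_mul, mul_one, mul_zero, sub_zero, zero_sub] at hx₁ hx₂ hy₁ hy₂
  have hunit : D * (D * (x₁ * y₂ - x₂ * y₁)) = D := by
    simp only [det2] at hD_def
    linear_combination (-n₂ 1) * hy₂ - D * y₂ * hx₁ - n₂ 0 * hx₂ + D * x₂ * hy₁ - hD_def
  have := Int.eq_one_of_mul_eq_one_right (by omega)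
    (mul_left_cancel₀ (by omega) (hunit.trans (mul_one D).symm))
  omega

lemma exists_mem_triangle_of_two_le_det2 {n₁ n₂ : Fin 2 → ℤ} (hD : 2 ≤ det2 n₁ n₂) :
    ∃ (p : Fin 2 → ℤ) (a b : ℤ), 0 ≤ a ∧ a < det2 n₁ n₂ ∧ 0 ≤ b ∧ b < det2 n₁ n₂ ∧
      0 < a + b ∧ a + b ≤ det2 n₁ n₂ ∧ det2 n₁ n₂ • p = a • n₁ + b • n₂ := by
  obtain ⟨w, hw⟩ := exists_not_dvd_det2 hD
  have hcramer := det2_smul_eq n₁ n₂ w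
  generalize det2 n₁ n₂ = D at *
  generalize det2 w n₂ = A at *
  generalize det2 n₁ w = B at *
  rw [Int.dvd_iff_emod_eq_zero, Int.dvd_iff_emod_eq_zero] at hw
  have hp : D • (w - (A / D) • n₁ - (B / D) • n₂) = (A % D) • n₁ + (B % D) • n₂ := by
    rw [smul_sub, smul_sub, hcramer, smul_smul, smul_smul, Int.emod_def, Int.emod_def, sub_smul,
      sub_smul]
    abel
  have ha := Int.emod_nonneg A (by omega : D ≠ 0)
  have hb := Int.emod_nonneg B (by omega : D ≠ 0)
  have ha' := Int.emod_lt_of_pos A (by omega : 0 < D)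
  have hb' := Int.emod_lt_of_pos B (by omega : 0 < D)
  by_cases hle : A % D + B % D ≤ D
  · exact ⟨_, _, _, ha, ha', hb, hb', by omega, hle, hp⟩
  -- otherwise reflect through the midpoint of `n₁, n₂`
  · refine ⟨n₁ + n₂ - (w - (A / D) • n₁ - (B / D) • n₂), D - A % D, D - B % D,
      by omega, by omega, by omega, by omega, by omega, by omega, ?_⟩
    rw [smul_sub, hp, smul_add, sub_smul, sub_smul]
    abel

variable {S : Finset (Fin 2 → ℤ)}

lemma exists_isActive_det2_lt (hS : S.Nonempty) {v : Fin 2 → ℝ}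
    (hv : v ∈ fineInterior (latticePolytope S)) {n₁ n₂ : Fin 2 → ℤ}
    (h₁ : IsActive (latticePolytope S) v n₁) (h₂ : IsActive (latticePolytope S) v n₂)
    (hD : 2 ≤ det2 n₁ n₂) :
    ∃ p, IsActive (latticePolytope S) v p ∧ 0 < det2 n₁ p ∧ det2 n₁ p < det2 n₁ n₂ := by
  obtain ⟨p, a, b, ha, haD, hb, hbD, hab, habD, hp⟩ := exists_mem_triangle_of_two_le_det2 hD
  set D := det2 n₁ n₂ with hD_def
  simp only [det2] at hD_def
  have hdet₁ : D * det2 n₁ p = b * D := by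
    have := congrArg (det2 n₁) hp
    simp only [det2, Pi.add_apply, Pi.smul_apply, smul_eq_mul] at this ⊢
    linear_combination this - b * hD_def
  have hdet₂ : D * det2 p n₂ = a * D := by
    have := congrArg (det2 · n₂) hp
    simp only [det2, Pi.add_apply, Pi.smul_apply, smul_eq_mul] at this ⊢
    linear_combination this - a * hD_def
  have hp0 : p ≠ 0 := by
    rintro rfl
    simp only [det2, Pi.zero_apply, mul_zero, zero_mul, sub_zero] at hdet₁ hdet₂
    have : a * D = 0 ∧ b * D = 0 := ⟨hdet₂.symm, hdet₁.symm⟩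
    simp only [mul_eq_zero] at this
    omega
  have hDR : (0 : ℝ) < D := by exact_mod_cast (by omega : 0 < D)
  have hcomb : toR p = ((a : ℝ) / D) • toR n₁ + ((b : ℝ) / D) • toR n₂ := by
    funext i
    have := congrFun hp i
    simp only [Pi.add_apply, Pi.smul_apply, smul_eq_mul] at this
    simp only [toR, Pi.add_apply, Pi.smul_apply, smul_eq_mul]
    field_simp
    rw [mul_comm]
    exact_mod_cast this
  obtain ⟨hsum, hact⟩ := IsActive.of_eq_smul_add_smul hS hv h₁ h₂ hp0 (by positivity)
    (by positivity) (by rw [← add_div, div_le_one hDR]; exact_mod_cast habD) hcomb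
  rw [← add_div, div_eq_one_iff_eq hDR.ne'] at hsum
  have hsum' : a + b = D := by exact_mod_cast hsum
  have hdet : det2 n₁ p = b := by
    rw [mul_comm b] at hdet₁
    exact mul_left_cancel₀ (by omega) hdet₁
  exact ⟨p, hact, by omega, by omega⟩

lemma exists_isActive_det2_eq_one (hS : S.Nonempty) {v : Fin 2 → ℝ}
    (hv : v ∈ fineInterior (latticePolytope S))
    (h : ∃ n₁ n₂, IsActive (latticePolytope S) v n₁ ∧ IsActive (latticePolytope S) v n₂ ∧
      0 < det2 n₁ n₂) :
    ∃ n₁ n₂, IsActive (latticePolytope S) v n₁ ∧ IsActive (latticePolytope S) v n₂ ∧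
      det2 n₁ n₂ = 1 := by
  classical
  have hex : ∃ k : ℕ, ∃ n₁ n₂, IsActive (latticePolytope S) v n₁ ∧
      IsActive (latticePolytope S) v n₂ ∧ det2 n₁ n₂ = k + 1 := by
    obtain ⟨n₁, n₂, h₁, h₂, hpos⟩ := h
    exact ⟨(det2 n₁ n₂ - 1).toNat, n₁, n₂, h₁, h₂, by omega⟩
  obtain ⟨n₁, n₂, h₁, h₂, hk⟩ := Nat.find_spec hex
  refine ⟨n₁, n₂, h₁, h₂, ?_⟩
  by_contra hne
  obtain ⟨p, hp, hpos, hlt⟩ := exists_isActive_det2_lt hS hv h₁ h₂ (by omega)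
  exact Nat.find_min hex (m := (det2 n₁ p - 1).toNat) (by omega) ⟨n₁, p, h₁, hp, by omega⟩

lemma isLatticePoint_of_isActive_det2_eq_one (hS : S.Nonempty) {v : Fin 2 → ℝ}
    {n₁ n₂ : Fin 2 → ℤ} (h₁ : IsActive (latticePolytope S) v n₁)
    (h₂ : IsActive (latticePolytope S) v n₂) (hdet : det2 n₁ n₂ = 1) : IsLatticePoint v := by
  obtain ⟨k₁, hk₁⟩ := exists_ordP_toR_eq_intCast hS n₁
  obtain ⟨k₂, hk₂⟩ := exists_ordP_toR_eq_intCast hS n₂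
  have e₁ := h₁.2
  have e₂ := h₂.2
  rw [hk₁] at e₁
  rw [hk₂] at e₂
  simp only [dotProduct, Fin.sum_univ_two, toR] at e₁ e₂
  have hdetR : (n₁ 0 : ℝ) * n₂ 1 - n₁ 1 * n₂ 0 = 1 := by exact_mod_cast hdet
  intro i
  fin_cases i
  · refine ⟨(k₁ + 1) * n₂ 1 - (k₂ + 1) * n₁ 1, ?_⟩
    push_cast
    linear_combination (n₂ 1 : ℝ) * e₁ - (n₁ 1 : ℝ) * e₂ - v 0 * hdetR
  · refine ⟨(k₂ + 1) * n₁ 0 - (k₁ + 1) * n₂ 0, ?_⟩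
    push_cast
    linear_combination (n₁ 0 : ℝ) * e₂ - (n₂ 0 : ℝ) * e₁ - v 1 * hdetR

lemma exists_isActive_det2_pos (hS : S.Nonempty) {v : Fin 2 → ℝ}
    (hv : v ∈ Set.extremePoints ℝ (fineInterior (latticePolytope S)))
    (hvi : v ∈ interior (latticePolytope S)) :
    ∃ n₁ n₂, IsActive (latticePolytope S) v n₁ ∧ IsActive (latticePolytope S) v n₂ ∧
      0 < det2 n₁ n₂ := by
  by_contra! h
  have hdep : ∀ n₁ n₂, IsActive (latticePolytope S) v n₁ → IsActive (latticePolytope S) v n₂ →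
      det2 n₁ n₂ = 0 := fun n₁ n₂ h₁ h₂ => by
    have := h n₂ n₁ h₂ h₁
    have := h n₁ n₂ h₁ h₂
    simp only [det2] at *
    linarith
  by_cases hex : ∃ n₀, IsActive (latticePolytope S) v n₀
  · obtain ⟨n₀, hn₀⟩ := hex
    -- the quarter turn of `n₀` is orthogonal to every active direction
    have hrot := eq_zero_of_mem_extremePoints_fineInterior hS hv hvi (w := ![-(n₀ 1 : ℝ), n₀ 0])
      fun n hn => by
        have := hdep n₀ n hn₀ hn
        simp only [det2] at this
        simp only [dotProduct, Fin.sum_univ_two, toR, Matrix.cons_val_zero, Matrix.cons_val_one,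
          Matrix.cons_val_fin_one]
        linear_combination (by exact_mod_cast this : (n₀ 0 * n 1 - n₀ 1 * n 0 : ℝ) = 0)
    apply hn₀.1
    funext i
    fin_cases i
    · simpa using congrFun hrot 1
    · simpa using congrFun hrot 0
  · have := eq_zero_of_mem_extremePoints_fineInterior hS hv hvi (w := ![1, 0])
      fun n hn => (hex ⟨n, hn⟩).elim
    simpa using congrFun this 0

lemma isLatticePoint_of_mem_extremePoints_fineInterior (hS : S.Nonempty) {v : Fin 2 → ℝ}
    (hv : v ∈ Set.extremePoints ℝ (fineInterior (latticePolytope S)))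
    (hvi : v ∈ interior (latticePolytope S)) : IsLatticePoint v := by
  obtain ⟨n₁, n₂, h₁, h₂, hdet⟩ :=
    exists_isActive_det2_eq_one hS hv.1 (exists_isActive_det2_pos hS hv hvi)
  exact isLatticePoint_of_isActive_det2_eq_one hS h₁ h₂ hdet

lemma fineInterior_subset_convexHull (hint : (interior (latticePolytope S)).Nonempty) :
    fineInterior (latticePolytope S)
      ⊆ convexHull ℝ {x ∈ interior (latticePolytope S) | IsLatticePoint x} := by
  have hS := nonempty_of_interior_latticePolytope_nonempty hint
  have hsub := fineInterior_subset_interior hint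
  rw [← closure_convexHull_extremePoints (isCompact_fineInterior hint) (convex_fineInterior _)]
  refine closure_minimal (convexHull_mono fun v hv => ⟨hsub hv.1,
    isLatticePoint_of_mem_extremePoints_fineInterior hS hv (hsub hv.1)⟩) ?_
  exact (finite_setOf_isLatticePoint
    ((isCompact_latticePolytope S).isBounded.subset interior_subset)).isClosed_convexHull ℝ

end Plane

/-- the Fine interior of a 2-dimensional lattice polytope equals the
convex hull of its interior lattice points; in particular it is empty when there
are no interior lattice points. -/
theorem stmt3 (Δ : Set (Fin 2 → ℝ)) (h1 : IsLatticePolytope Δ)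
    (h2 : (interior Δ).Nonempty) :
    fineInterior Δ = convexHull ℝ {x ∈ interior Δ | IsLatticePoint x} ∧
      ({x ∈ interior Δ | IsLatticePoint x} = ∅ → fineInterior Δ = ∅) := by
  obtain ⟨S, rfl⟩ := h1
  have hFI := (fineInterior_subset_convexHull h2).antisymm
    (convexHull_subset_fineInterior (nonempty_of_interior_latticePolytope_nonempty h2))
  exact ⟨hFI, fun h => by rw [hFI, h, convexHull_empty]⟩
end
end

section
/- Let Δ ⊂ ℝ^d be a d-dimensional lattice polytope with Δ^{FI} = {0}. Then [[Δ*]*] is the smallest pseudoreflexive polytope containing Δ: it is pseudoreflexive, contains Δ, and is contained in every pseudoreflexive polytope containing Δ. -/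
open Finset Pointwise MeasureTheory
noncomputable section

variable {d : ℕ}

section AuxLemmas

lemma pairR_comm (x y : Fin d → ℝ) : pairR x y = pairR y x :=
  Finset.sum_congr rfl fun i _ => mul_comm _ _

@[simp] lemma pairR_zero_left (y : Fin d → ℝ) : pairR 0 y = 0 := by simp [pairR]
@[simp] lemma pairR_zero_right (x : Fin d → ℝ) : pairR x 0 = 0 := by simp [pairR]

lemma pairR_smul_left (c : ℝ) (x y : Fin d → ℝ) : pairR (c • x) y = c * pairR x y := by
  simp [pairR, Finset.mul_sum, mul_assoc]

lemma pairR_add_left (x x' y : Fin d → ℝ) : pairR (x + x') y = pairR x y + pairR x' y := by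
  simp [pairR, add_mul, Finset.sum_add_distrib]

lemma pairR_smul_right (c : ℝ) (x y : Fin d → ℝ) : pairR x (c • y) = c * pairR x y := by
  rw [pairR_comm, pairR_smul_left, pairR_comm]

lemma pairR_add_right (x y y' : Fin d → ℝ) : pairR x (y + y') = pairR x y + pairR x y' := by
  rw [pairR_comm, pairR_add_left, pairR_comm x y, pairR_comm x y']

lemma pairR_self_nonneg (x : Fin d → ℝ) : 0 ≤ pairR x x :=
  Finset.sum_nonneg fun i _ => mul_self_nonneg _

lemma eq_zero_of_pairR_self {x : Fin d → ℝ} (h : pairR x x ≤ 0) : x = 0 := by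
  have h0 : ∀ i ∈ Finset.univ, x i * x i = 0 := by
    have := (Finset.sum_eq_zero_iff_of_nonneg (fun i _ => mul_self_nonneg (x i))).mp
      (le_antisymm h (pairR_self_nonneg x))
    exact this
  funext i
  have := h0 i (Finset.mem_univ i)
  exact mul_self_eq_zero.mp this

lemma continuous_pairR_left (y : Fin d → ℝ) : Continuous fun x : Fin d → ℝ => pairR x y := by
  unfold pairR
  exact continuous_finset_sum _ fun i _ => (continuous_apply i).mul continuous_const

lemma riesz (f : (Fin d → ℝ) →ₗ[ℝ] ℝ) : ∃ y, ∀ z, f z = pairR z y := by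
  refine ⟨fun i => f (Pi.single i 1), fun z => ?_⟩
  have hz : z = ∑ i, z i • (Pi.single i (1:ℝ) : Fin d → ℝ) := by
    funext j
    simp [Finset.sum_apply, Pi.single_apply]
  calc f z = f (∑ i, z i • (Pi.single i (1:ℝ) : Fin d → ℝ)) := by rw [← hz]
  _ = ∑ i, z i * f (Pi.single i 1) := by rw [map_sum]; simp [smul_eq_mul]
  _ = pairR z _ := rfl

lemma pairR_toR (a b : Fin d → ℤ) : pairR (toR a) (toR b) = ((∑ i, a i * b i : ℤ) : ℝ) := by
  simp [pairR, toR]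

lemma convex_pair_ge (y : Fin d → ℝ) (c : ℝ) : Convex ℝ {x | c ≤ pairR x y} := by
  intro x hx x' hx' a b ha hb hab
  simp only [Set.mem_setOf_eq] at *
  rw [pairR_add_left, pairR_smul_left, pairR_smul_left]
  have h1 := mul_le_mul_of_nonneg_left hx ha
  have h2 := mul_le_mul_of_nonneg_left hx' hb
  calc c = a*c + b*c := by rw [← add_mul, hab, one_mul]
  _ ≤ _ := add_le_add h1 h2


lemma isLatticePoint_toR (n : Fin d → ℤ) : IsLatticePoint (toR n) := fun i => ⟨n i, rfl⟩

@[simp] lemma toR_zero : toR (0 : Fin d → ℤ) = 0 := by funext i; simp [toR]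

lemma latticeHull_eq (P : Set (Fin d → ℝ)) :
    latticeHull P = convexHull ℝ (toR '' {n : Fin d → ℤ | toR n ∈ P}) := by
  unfold latticeHull
  congr 1
  ext x
  constructor
  · rintro ⟨hxP, hlat⟩
    obtain ⟨n, rfl⟩ := isLatticePoint_iff.mp hlat
    exact ⟨n, hxP, rfl⟩
  · rintro ⟨n, hn, rfl⟩
    exact ⟨hn, isLatticePoint_toR n⟩

lemma latticeHull_mono {P P' : Set (Fin d → ℝ)} (h : P ⊆ P') : latticeHull P ⊆ latticeHull P' :=
  convexHull_mono fun x hx => ⟨h hx.1, hx.2⟩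

lemma polarSet_antitone {P P' : Set (Fin d → ℝ)} (h : P ⊆ P') : polarSet P' ⊆ polarSet P :=
  fun y hy x hx => hy x (h hx)

lemma convex_polarSet (P : Set (Fin d → ℝ)) : Convex ℝ (polarSet P) := by
  intro y hy y' hy' a b ha hb hab x hx
  have h1 := mul_le_mul_of_nonneg_left (hy x hx) ha
  have h2 := mul_le_mul_of_nonneg_left (hy' x hx) hb
  rw [pairR_add_right, pairR_smul_right, pairR_smul_right]
  calc (-1:ℝ) = a * (-1) + b * (-1) := by rw [← add_mul, hab]; ring
  _ ≤ _ := add_le_add h1 h2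

lemma zero_mem_polarSet (P : Set (Fin d → ℝ)) : (0 : Fin d → ℝ) ∈ polarSet P :=
  fun x _ => by rw [pairR_zero_right]; norm_num

lemma latticeHull_subset {P : Set (Fin d → ℝ)} (hP : Convex ℝ P) : latticeHull P ⊆ P :=
  convexHull_min (fun x hx => hx.1) hP

lemma zero_mem_latticeHull_polarSet (P : Set (Fin d → ℝ)) :
    (0 : Fin d → ℝ) ∈ latticeHull (polarSet P) :=
  subset_convexHull ℝ _ ⟨zero_mem_polarSet P, by rw [← toR_zero]; exact isLatticePoint_toR 0⟩

-- ord machinery for hulls of finsets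
lemma hull_subset_pair_ge {S : Finset (Fin d → ℤ)} {y : Fin d → ℝ} {c : ℝ}
    (h : ∀ s ∈ S, c ≤ pairR (toR s) y) :
    convexHull ℝ (toR '' (S : Set (Fin d → ℤ))) ⊆ {x | c ≤ pairR x y} :=
  convexHull_min (by rintro x ⟨s, hs, rfl⟩; exact h s hs) (convex_pair_ge y c)

lemma ordP_hull_eq {S : Finset (Fin d → ℤ)} (hS : S.Nonempty) (y : Fin d → ℝ) :
    ordP (convexHull ℝ (toR '' (S : Set (Fin d → ℤ)))) y
      = S.inf' hS (fun s => pairR (toR s) y) := by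
  obtain ⟨s₀, hs₀, hmin⟩ := S.exists_mem_eq_inf' hS (fun s => pairR (toR s) y)
  have hlb : ∀ r ∈ (fun x => pairR x y) '' (convexHull ℝ (toR '' (S : Set (Fin d → ℤ)))),
      S.inf' hS (fun s => pairR (toR s) y) ≤ r := by
    rintro r ⟨x, hx, rfl⟩
    exact hull_subset_pair_ge (fun s hs => Finset.inf'_le _ hs) hx
  apply le_antisymm
  · apply csInf_le ⟨_, hlb⟩
    exact ⟨toR s₀, subset_convexHull ℝ _ ⟨s₀, hs₀, rfl⟩, hmin.symm⟩
  · exact le_csInf ⟨_, ⟨toR s₀, subset_convexHull ℝ _ ⟨s₀, hs₀, rfl⟩, rfl⟩⟩ hlb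

lemma ordP_hull_le {S : Finset (Fin d → ℤ)} (hS : S.Nonempty) {x : Fin d → ℝ}
    (hx : x ∈ convexHull ℝ (toR '' (S : Set (Fin d → ℤ)))) (y : Fin d → ℝ) :
    ordP (convexHull ℝ (toR '' (S : Set (Fin d → ℤ)))) y ≤ pairR x y := by
  rw [ordP_hull_eq hS]
  exact hull_subset_pair_ge (fun s hs => Finset.inf'_le _ hs) hx

lemma le_ordP_hull {S : Finset (Fin d → ℤ)} (hS : S.Nonempty) {y : Fin d → ℝ} {c : ℝ}
    (h : ∀ s ∈ S, c ≤ pairR (toR s) y) :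
    c ≤ ordP (convexHull ℝ (toR '' (S : Set (Fin d → ℤ)))) y := by
  rw [ordP_hull_eq hS]
  exact Finset.le_inf' hS _ h

lemma ordP_hull_attained {S : Finset (Fin d → ℤ)} (hS : S.Nonempty) (y : Fin d → ℝ) :
    ∃ s₀ ∈ S, ordP (convexHull ℝ (toR '' (S : Set (Fin d → ℤ)))) y = pairR (toR s₀) y := by
  obtain ⟨s₀, hs₀, hmin⟩ := S.exists_mem_eq_inf' hS (fun s => pairR (toR s) y)
  exact ⟨s₀, hs₀, by rw [ordP_hull_eq hS]; exact hmin⟩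

lemma ordP_hull_int {S : Finset (Fin d → ℤ)} (hS : S.Nonempty) (n : Fin d → ℤ) :
    ∃ z : ℤ, ordP (convexHull ℝ (toR '' (S : Set (Fin d → ℤ)))) (toR n) = (z : ℝ) := by
  obtain ⟨s₀, _, h⟩ := ordP_hull_attained hS (toR n)
  exact ⟨∑ i, s₀ i * n i, by rw [h, pairR_toR]⟩

-- Dirichlet-type simultaneous approximation via pigeonhole
lemma dirichlet (y : Fin d → ℝ) {δ : ℝ} (hδ : 0 < δ) :
    ∃ (q : ℕ) (n : Fin d → ℤ), 1 ≤ q ∧ ∀ i, |(n i : ℝ) - q * y i| < δ := by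
  set M : ℕ := ⌈1/δ⌉₊ with hM
  have hM0 : 0 < M := Nat.ceil_pos.mpr (by positivity)
  have hM0' : (0:ℝ) < M := by exact_mod_cast hM0
  have hMδ : 1 / (M:ℝ) ≤ δ := by
    rw [div_le_iff₀ hM0']
    have h1 : 1/δ ≤ (M:ℝ) := Nat.le_ceil _
    calc (1:ℝ) = δ * (1/δ) := by field_simp
    _ ≤ δ * M := mul_le_mul_of_nonneg_left h1 hδ.le
  have hfr : ∀ (r : ℝ), ⌊Int.fract r * M⌋₊ < M := by
    intro r
    have h1 := Int.fract_lt_one r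
    have h2 := Int.fract_nonneg r
    have : Int.fract r * M < M := by nlinarith
    exact (Nat.floor_lt (by positivity)).mpr this
  have hcard : Fintype.card (Fin d → Fin M) < Fintype.card (Fin (M^d + 1)) := by
    simp [Fintype.card_fun]
  obtain ⟨a, b, hab, heq⟩ := Fintype.exists_ne_map_eq_of_card_lt
    (fun (k : Fin (M^d+1)) => (fun i => (⟨⌊Int.fract (((k:ℕ):ℝ) * y i) * M⌋₊, hfr _⟩ : Fin M)))
    hcard
  -- wlog a < b
  have key : ∀ (k₁ k₂ : ℕ), k₁ < k₂ →
      (∀ i, ⌊Int.fract ((k₁:ℝ) * y i) * M⌋₊ = ⌊Int.fract ((k₂:ℝ) * y i) * M⌋₊) →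
      ∃ (q : ℕ) (n : Fin d → ℤ), 1 ≤ q ∧ ∀ i, |(n i : ℝ) - q * y i| < δ := by
    intro k₁ k₂ hlt hfloor
    refine ⟨k₂ - k₁, fun i => ⌊(k₂:ℝ) * y i⌋ - ⌊(k₁:ℝ) * y i⌋, by omega, fun i => ?_⟩
    have hcast : ((k₂ - k₁ : ℕ) : ℝ) = (k₂:ℝ) - (k₁:ℝ) := by
      push_cast [Nat.cast_sub hlt.le]; ring
    have hfl := hfloor i
    set t₁ := Int.fract ((k₁:ℝ) * y i) with ht₁
    set t₂ := Int.fract ((k₂:ℝ) * y i) with ht₂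
    have hb1 : (⌊t₁ * M⌋₊ : ℝ) ≤ t₁ * M := Nat.floor_le (mul_nonneg (Int.fract_nonneg _) hM0'.le)
    have hb2 : (⌊t₂ * M⌋₊ : ℝ) ≤ t₂ * M := Nat.floor_le (mul_nonneg (Int.fract_nonneg _) hM0'.le)
    have hc1 : t₁ * M < ⌊t₁ * M⌋₊ + 1 := Nat.lt_floor_add_one _
    have hc2 : t₂ * M < ⌊t₂ * M⌋₊ + 1 := Nat.lt_floor_add_one _
    have hdiff : |t₂ - t₁| < 1/M := by
      rw [hfl] at hb1 hc1
      have e1 : t₂ - t₁ < 1/M := by rw [lt_div_iff₀ hM0']; nlinarith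
      have e2 : t₁ - t₂ < 1/M := by rw [lt_div_iff₀ hM0']; nlinarith
      rw [abs_lt]; constructor <;> linarith
    have hval : ((⌊(k₂:ℝ) * y i⌋ - ⌊(k₁:ℝ) * y i⌋ : ℤ) : ℝ) - ((k₂ - k₁ : ℕ):ℝ) * y i
        = -(t₂ - t₁) := by
      rw [hcast, ht₁, ht₂, Int.fract, Int.fract]
      push_cast
      ring
    calc |((⌊(k₂:ℝ) * y i⌋ - ⌊(k₁:ℝ) * y i⌋ : ℤ) : ℝ) - ((k₂ - k₁:ℕ):ℝ) * y i|
        = |t₂ - t₁| := by rw [hval, abs_neg]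
    _ < 1/M := hdiff
    _ ≤ δ := hMδ
  rcases lt_or_gt_of_ne (fun h : (a:ℕ) = (b:ℕ) => hab (Fin.ext h)) with h | h
  · exact key a b h (fun i => congrArg Fin.val (congrFun heq i))
  · exact key b a h (fun i => congrArg Fin.val (congrFun heq.symm i))

-- supporting functional at 0 for convex set with nonempty interior
lemma exists_support {C : Set (Fin d → ℝ)} (hC : Convex ℝ C) (hne : (interior C).Nonempty)
    (h0 : (0 : Fin d → ℝ) ∉ interior C) :
    ∃ m : Fin d → ℝ, m ≠ 0 ∧ ∀ z ∈ C, 0 ≤ pairR z m := by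
  obtain ⟨f, hf⟩ := geometric_hahn_banach_open_point hC.interior isOpen_interior h0
  obtain ⟨y, hy⟩ := riesz (f : (Fin d → ℝ) →ₗ[ℝ] ℝ)
  have hy' : ∀ z, f z = pairR z y := hy
  have hneg : ∀ a ∈ interior C, pairR a y < 0 := by
    intro a ha
    have := hf a ha
    rw [hy' a, map_zero] at this
    exact this
  obtain ⟨a, ha⟩ := hne
  have hay : pairR a y < 0 := hneg a ha
  have hyne : y ≠ 0 := by
    rintro rfl
    rw [pairR_zero_right] at hay
    exact lt_irrefl _ hay
  refine ⟨-y, by simpa using neg_ne_zero.mpr hyne, fun z hz => ?_⟩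
  have hz0 : pairR z y ≤ 0 := by
    by_contra hpos
    push_neg at hpos
    set pz := pairR z y
    set pa := pairR a y
    have hd : 0 < pz - pa := by dsimp [pz, pa]; linarith
    set t : ℝ := min (1/2) (pz / (2 * (pz - pa))) with htdef
    have ht0 : 0 < t := lt_min (by norm_num) (div_pos hpos (by linarith))
    have ht1 : t ≤ 1/2 := min_le_left _ _
    have htb : t ≤ pz / (2 * (pz - pa)) := min_le_right _ _
    have hmem : t • a + (1 - t) • z ∈ interior C :=
      hC.combo_interior_closure_mem_interior ha (subset_closure hz) ht0 (by linarith) (by ring)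
    have := hneg _ hmem
    rw [pairR_add_left, pairR_smul_left, pairR_smul_left] at this
    have htle : t * (pz - pa) ≤ pz / 2 := by
      rw [le_div_iff₀ (by linarith : (0:ℝ) < 2 * (pz - pa))] at htb
      nlinarith
    nlinarith
  have : pairR z (-y) = -pairR z y := by
    rw [show -y = (-1 : ℝ) • y by funext i; simp, pairR_smul_right]; ring
  rw [this]
  linarith

lemma zero_mem_interior_of_ord {Δ : Set (Fin d → ℝ)} {S : Finset (Fin d → ℤ)}
    (hΔ : Δ = convexHull ℝ (toR '' (S : Set (Fin d → ℤ))))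
    (h2 : (interior Δ).Nonempty)
    (hord : ∀ n : Fin d → ℤ, n ≠ 0 → ordP Δ (toR n) ≤ -1) :
    (0 : Fin d → ℝ) ∈ interior Δ := by
  have hSne : S.Nonempty := by
    rcases S.eq_empty_or_nonempty with h | h
    · exfalso
      obtain ⟨x, hx⟩ := h2
      have hxΔ : x ∈ Δ := interior_subset hx
      rw [hΔ, h] at hxΔ
      simp at hxΔ
    · exact h
  by_contra h0
  have hconv : Convex ℝ Δ := hΔ ▸ convex_convexHull ℝ _
  obtain ⟨m, hm0, hm⟩ := exists_support hconv h2 h0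
  obtain ⟨i₀, hi₀⟩ : ∃ i, m i ≠ 0 := by
    by_contra h; push_neg at h; exact hm0 (funext h)
  set C : ℝ := ∑ s ∈ S, ∑ i, |(s i : ℝ)| with hCdef
  have hC0 : 0 ≤ C := Finset.sum_nonneg fun s _ => Finset.sum_nonneg fun i _ => abs_nonneg _
  set δ : ℝ := min (1/(C+1)) (|m i₀|/2) with hδdef
  have hδ : 0 < δ := lt_min (by positivity) (half_pos (abs_pos.mpr hi₀))
  obtain ⟨q, n, hq, hn⟩ := dirichlet m hδ
  have hq' : (1:ℝ) ≤ (q:ℝ) := by exact_mod_cast hq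
  have hn0 : n ≠ 0 := by
    intro h
    have hh := hn i₀
    rw [h] at hh
    simp only [Pi.zero_apply, Int.cast_zero, zero_sub, abs_neg, abs_mul, Nat.abs_cast] at hh
    have h1 : |m i₀| ≤ (q:ℝ) * |m i₀| := le_mul_of_one_le_left (abs_nonneg _) hq'
    have h2' : δ ≤ |m i₀|/2 := min_le_right _ _
    have := abs_pos.mpr hi₀
    linarith
  have hkey : ∀ s ∈ S, -(C * δ) ≤ pairR (toR s) (toR n) := by
    intro s hs
    have hsΔ : toR s ∈ Δ := hΔ ▸ subset_convexHull ℝ _ ⟨s, hs, rfl⟩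
    have hsm : 0 ≤ pairR (toR s) m := hm _ hsΔ
    have hsplit : pairR (toR s) (toR n)
        = (q:ℝ) * pairR (toR s) m + ∑ i, (s i : ℝ) * ((n i : ℝ) - q * m i) := by
      rw [pairR, pairR, Finset.mul_sum, ← Finset.sum_add_distrib]
      apply Finset.sum_congr rfl
      intro i _
      simp only [toR]
      ring
    have hterm : ∀ i ∈ Finset.univ, -(|(s i : ℝ)| * δ) ≤ (s i : ℝ) * ((n i : ℝ) - q * m i) := by
      intro i _
      have h1 : |(s i : ℝ) * ((n i : ℝ) - q * m i)| ≤ |(s i : ℝ)| * δ := by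
        rw [abs_mul]
        exact mul_le_mul_of_nonneg_left (hn i).le (abs_nonneg _)
      linarith [neg_abs_le ((s i : ℝ) * ((n i : ℝ) - q * m i))]
    have hB : -(δ * ∑ i, |(s i : ℝ)|) ≤ ∑ i, (s i : ℝ) * ((n i : ℝ) - q * m i) := by
      have := Finset.sum_le_sum hterm
      have he : ∑ i, -(|(s i : ℝ)| * δ) = -(δ * ∑ i, |(s i : ℝ)|) := by
        rw [Finset.mul_sum, ← neg_one_mul, Finset.mul_sum]
        apply Finset.sum_congr rfl
        intro i _; ring
      linarith [he ▸ this]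
    have hsum_le_C : ∑ i, |(s i : ℝ)| ≤ C :=
      Finset.single_le_sum (f := fun s : Fin d → ℤ => ∑ i, |(s i : ℝ)|)
        (fun s _ => Finset.sum_nonneg fun i _ => abs_nonneg _) hs
    have hA : 0 ≤ (q:ℝ) * pairR (toR s) m := mul_nonneg (Nat.cast_nonneg q) hsm
    rw [hsplit]
    nlinarith
  have hub : -(C*δ) ≤ ordP Δ (toR n) := by
    rw [hΔ]; exact le_ordP_hull hSne hkey
  have hCδ : C * δ < 1 := by
    have h1 : δ ≤ 1/(C+1) := min_le_left _ _
    have h2' : C * δ ≤ C * (1/(C+1)) := mul_le_mul_of_nonneg_left h1 hC0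
    have h3 : C * (1/(C+1)) < 1 := by
      rw [mul_one_div, div_lt_one (by linarith)]
      linarith
    linarith
  have := hord n hn0
  linarith

lemma finite_lattice_of_bound {P : Set (Fin d → ℝ)} {c : ℝ}
    (h : ∀ x ∈ P, ∀ i, |x i| ≤ c) : {n : Fin d → ℤ | toR n ∈ P}.Finite := by
  have hsub : {n : Fin d → ℤ | toR n ∈ P}
      ⊆ Set.pi Set.univ (fun _ : Fin d => Set.Icc (-⌈c⌉) ⌈c⌉) := by
    intro n hn i _
    have hb := h _ hn i
    simp only [toR] at hb
    have h1 : |(n i : ℝ)| ≤ (⌈c⌉ : ℝ) := le_trans hb (Int.le_ceil c)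
    rw [abs_le] at h1
    constructor
    · exact_mod_cast h1.1
    · exact_mod_cast h1.2
  exact Set.Finite.subset (Set.Finite.pi fun _ => Set.finite_Icc _ _) hsub

lemma polar_bound {P : Set (Fin d → ℝ)} {r : ℝ} (hr : 0 < r)
    (hball : Metric.ball (0 : Fin d → ℝ) r ⊆ P) :
    ∀ y ∈ polarSet P, ∀ i, |y i| ≤ 2/r := by
  intro y hy i
  have key : ∀ ε : ℝ, |ε| < r → -1 ≤ ε * y i := by
    intro ε hε
    have hmem : (Pi.single i ε : Fin d → ℝ) ∈ Metric.ball (0 : Fin d → ℝ) r := by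
      rw [mem_ball_zero_iff]
      apply lt_of_le_of_lt _ hε
      apply (pi_norm_le_iff_of_nonneg (abs_nonneg ε)).mpr
      intro j
      rw [Pi.single_apply]
      by_cases hj : j = i <;> simp [hj, abs_nonneg]
    have hpm := hy _ (hball hmem)
    have hp : pairR (Pi.single i ε : Fin d → ℝ) y = ε * y i := by
      unfold pairR
      rw [Finset.sum_eq_single i]
      · rw [Pi.single_apply, if_pos rfl]
      · intro j _ hj
        rw [Pi.single_apply, if_neg hj, zero_mul]
      · intro hi; exact absurd (Finset.mem_univ i) hi
    rwa [hp] at hpm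
  rw [abs_le]
  constructor
  · have h1 := key (r/2) (by rw [abs_of_pos (by positivity)]; linarith)
    rw [← neg_div, div_le_iff₀ hr]
    nlinarith
  · have h1 := key (-(r/2)) (by rw [abs_neg, abs_of_pos (by positivity)]; linarith)
    rw [le_div_iff₀ hr]
    nlinarith

lemma exists_perp {G : Set (Fin d → ℝ)} (hG : Submodule.span ℝ G ≠ ⊤) :
    ∃ m : Fin d → ℝ, m ≠ 0 ∧ ∀ z ∈ G, pairR z m = 0 := by
  set W := Submodule.span ℝ G with hW
  obtain ⟨v, hv⟩ : ∃ v, v ∉ W := by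
    by_contra h; push_neg at h; exact hG (eq_top_iff.mpr fun x _ => h x)
  have hv' : (Submodule.Quotient.mk v : (Fin d → ℝ) ⧸ W) ≠ 0 := by
    simpa [Submodule.Quotient.mk_eq_zero] using hv
  obtain ⟨φ, hφ⟩ : ∃ φ : Module.Dual ℝ ((Fin d → ℝ) ⧸ W),
      φ (Submodule.Quotient.mk v) ≠ 0 := by
    by_contra h; push_neg at h
    exact hv' ((Module.forall_dual_apply_eq_zero_iff ℝ _).mp h)
  obtain ⟨m, hm⟩ := riesz (φ.comp W.mkQ)
  refine ⟨m, ?_, fun z hz => ?_⟩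
  · intro h
    apply hφ
    have := hm v
    rw [h, pairR_zero_right, LinearMap.comp_apply, Submodule.mkQ_apply] at this
    exact this
  · have := hm z
    rw [LinearMap.comp_apply, Submodule.mkQ_apply,
      (Submodule.Quotient.mk_eq_zero W).mpr (Submodule.subset_span hz), map_zero] at this
    exact this.symm

lemma affineSpan_top_of_span_top {G : Set (Fin d → ℝ)} (h0 : (0 : Fin d → ℝ) ∈ G)
    (h : Submodule.span ℝ G = ⊤) : affineSpan ℝ G = ⊤ := by
  set p : Submodule ℝ (Fin d → ℝ) :=
    { carrier := (affineSpan ℝ G : Set (Fin d → ℝ))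
      zero_mem' := subset_affineSpan ℝ G h0
      add_mem' := by
        intro a b ha hb
        have := AffineSubspace.smul_vsub_vadd_mem (affineSpan ℝ G) (1:ℝ)
          ha (subset_affineSpan ℝ G h0) hb
        simpa using this
      smul_mem' := by
        intro c a ha
        have := AffineSubspace.smul_vsub_vadd_mem (affineSpan ℝ G) c
          ha (subset_affineSpan ℝ G h0) (subset_affineSpan ℝ G h0)
        simpa using this } with hp
  have hle : Submodule.span ℝ G ≤ p := Submodule.span_le.mpr (subset_affineSpan ℝ G)
  rw [h] at hle
  rw [eq_top_iff]
  intro x _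
  exact hle (Submodule.mem_top : x ∈ (⊤ : Submodule ℝ (Fin d → ℝ)))

lemma convex_pair_ge' (x : Fin d → ℝ) (c : ℝ) : Convex ℝ {z | c ≤ pairR x z} := by
  have : {z : Fin d → ℝ | c ≤ pairR x z} = {z | c ≤ pairR z x} := by
    ext z; simp [pairR_comm]
  rw [this]
  exact convex_pair_ge x c

lemma convex_latticeHull (P : Set (Fin d → ℝ)) : Convex ℝ (latticeHull P) :=
  convex_convexHull ℝ _

theorem stmt7' (Δ : Set (Fin d → ℝ)) (h1 : IsLatticePolytope Δ)
    (h2 : (interior Δ).Nonempty) (hFI : fineInterior Δ = {0}) :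
    (IsLatticePolytope (latticeHull (polarSet (latticeHull (polarSet Δ)))) ∧
      fineInterior (latticeHull (polarSet (latticeHull (polarSet Δ)))) = {0} ∧
      (latticeHull (polarSet (latticeHull (polarSet Δ)))) = latticeHull (polarSet (latticeHull
        (polarSet (latticeHull (polarSet (latticeHull (polarSet Δ)))))))) ∧
      Δ ⊆ latticeHull (polarSet (latticeHull (polarSet Δ))) ∧
      ∀ Δ' : Set (Fin d → ℝ),
        (IsLatticePolytope Δ' ∧ fineInterior Δ' = {0} ∧
          Δ' = latticeHull (polarSet (latticeHull (polarSet Δ')))) → Δ ⊆ Δ' →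
        latticeHull (polarSet (latticeHull (polarSet Δ))) ⊆ Δ' := by
  obtain ⟨S, hS⟩ := h1
  set Q : Set (Fin d → ℝ) := latticeHull (polarSet Δ) with hQdef
  set R : Set (Fin d → ℝ) := latticeHull (polarSet Q) with hRdef
  have hconvΔ : Convex ℝ Δ := hS ▸ convex_convexHull ℝ _
  have h0FI : (0 : Fin d → ℝ) ∈ fineInterior Δ := by rw [hFI]; rfl
  have hord : ∀ n : Fin d → ℤ, n ≠ 0 → ordP Δ (toR n) ≤ -1 := by
    intro n hn
    have := h0FI n hn
    rw [pairR_zero_left] at this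
    linarith
  have hSne : S.Nonempty := by
    rcases S.eq_empty_or_nonempty with h | h
    · exfalso
      obtain ⟨x, hx⟩ := h2
      have hxΔ : x ∈ Δ := interior_subset hx
      rw [hS, h] at hxΔ
      simp at hxΔ
    · exact h
  -- 0 is interior to Δ
  have hintΔ : (0 : Fin d → ℝ) ∈ interior Δ := zero_mem_interior_of_ord hS h2 hord
  obtain ⟨r₁, hr₁, hball₁⟩ : ∃ r > 0, Metric.ball (0 : Fin d → ℝ) r ⊆ Δ := by
    rw [mem_interior_iff_mem_nhds, Metric.mem_nhds_iff] at hintΔ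
    obtain ⟨ε, hε, h⟩ := hintΔ
    exact ⟨ε, hε, h⟩
  -- lattice points of Δ* are finite
  have hTfin : {n : Fin d → ℤ | toR n ∈ polarSet Δ}.Finite :=
    finite_lattice_of_bound (polar_bound hr₁ hball₁)
  set T : Finset (Fin d → ℤ) := hTfin.toFinset with hTdef
  have hQ : Q = convexHull ℝ (toR '' (T : Set (Fin d → ℤ))) := by
    rw [hQdef, latticeHull_eq]
    congr 1
    rw [hTdef, Set.Finite.coe_toFinset]
  have h0Q : (0 : Fin d → ℝ) ∈ Q := zero_mem_latticeHull_polarSet Δ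
  have hTne : T.Nonempty := by
    refine ⟨0, ?_⟩
    rw [hTdef, Set.Finite.mem_toFinset]
    show toR 0 ∈ polarSet Δ
    rw [toR_zero]
    exact zero_mem_polarSet Δ
  have hQconv : Convex ℝ Q := hQ ▸ convex_convexHull ℝ _
  -- membership of lattice points of Δ* in Q
  have hlatQ : ∀ n : Fin d → ℤ, toR n ∈ polarSet Δ → toR n ∈ Q := by
    intro n hn
    rw [hQdef]
    exact subset_convexHull ℝ _ ⟨hn, isLatticePoint_toR n⟩
  -- 0 is interior to Q
  have hintQ : (0 : Fin d → ℝ) ∈ interior Q := by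
    by_contra h0
    -- get a supporting functional
    have hmex : ∃ m : Fin d → ℝ, m ≠ 0 ∧ ∀ z ∈ Q, 0 ≤ pairR z m := by
      by_cases hne : (interior Q).Nonempty
      · exact exists_support hQconv hne h0
      · have hspan : Submodule.span ℝ Q ≠ ⊤ := by
          intro htop
          exact hne ((hQconv.interior_nonempty_iff_affineSpan_eq_top).mpr
            (affineSpan_top_of_span_top h0Q htop))
        obtain ⟨m, hm0, hm⟩ := exists_perp hspan
        exact ⟨m, hm0, fun z hz => le_of_eq (hm z hz).symm⟩
    obtain ⟨m, hm0, hm⟩ := hmex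
    -- scale m into Δ
    set c : ℝ := r₁ / (2 * (∑ i, |m i| + 1)) with hcdef
    have hsum0 : (0:ℝ) ≤ ∑ i, |m i| := Finset.sum_nonneg fun i _ => abs_nonneg _
    have hc : 0 < c := by positivity
    have hcm : c • m ∈ Δ := by
      apply hball₁
      rw [mem_ball_zero_iff]
      rcases eq_or_ne d 0 with hd | hd
      · subst hd
        have : c • m = 0 := by funext i; exact absurd i.2 (by omega)
        rw [this, norm_zero]; exact hr₁
      · have : Nonempty (Fin d) := ⟨⟨0, Nat.pos_of_ne_zero hd⟩⟩
        apply lt_of_le_of_lt ((pi_norm_le_iff_of_nonneg (by positivity : (0:ℝ) ≤ r₁/2)).mpr ?_)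
          (by linarith)
        intro i
        have h1 : |m i| ≤ ∑ j, |m j| :=
          Finset.single_le_sum (fun j _ => abs_nonneg (m j)) (Finset.mem_univ i)
        have : ‖(c • m) i‖ = c * |m i| := by
          simp [abs_mul, abs_of_pos hc]
        rw [this, hcdef]
        rw [div_mul_eq_mul_div, div_le_div_iff₀ (by positivity) (by norm_num : (0:ℝ) < 2)]
        nlinarith
    -- (c/2) • m lies in the Fine interior of Δ
    have hFImem : (c/2) • m ∈ fineInterior Δ := by
      intro n hn
      have hordn := hord n hn
      obtain ⟨z, hz⟩ : ∃ z : ℤ, ordP Δ (toR n) = (z : ℝ) := by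
        rw [hS]; exact ordP_hull_int hSne n
      have hpair : pairR ((c/2) • m) (toR n) = (c/2) * pairR m (toR n) := pairR_smul_left _ _ _
      by_cases hcase : -1 ≤ ordP Δ (toR n)
      · -- n is a lattice point of Δ*, hence in Q
        have hnpolar : toR n ∈ polarSet Δ := by
          intro x hx
          have : ordP Δ (toR n) ≤ pairR x (toR n) := by
            rw [hS] at hx ⊢
            exact ordP_hull_le hSne hx (toR n)
          linarith
        have hmn : 0 ≤ pairR (toR n) m := hm _ (hlatQ n hnpolar)
        rw [hpair, pairR_comm m (toR n)]
        have : 0 ≤ (c/2) * pairR (toR n) m := mul_nonneg (by positivity) hmn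
        linarith
      · -- ord ≤ -2
        push_neg at hcase
        have hord2 : ordP Δ (toR n) ≤ -2 := by
          rw [hz] at hcase ⊢
          have : z < -1 := by exact_mod_cast hcase
          have : z ≤ -2 := by omega
          exact_mod_cast this
        have hcmord : ordP Δ (toR n) ≤ pairR (c • m) (toR n) := by
          rw [hS] at hcm ⊢
          exact ordP_hull_le hSne hcm (toR n)
        rw [pairR_smul_left] at hcmord
        rw [hpair]
        nlinarith
    rw [hFI] at hFImem
    have : (c/2) • m = 0 := hFImem
    rcases smul_eq_zero.mp this with h | h
    · exact absurd h (by positivity)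
    · exact hm0 h
  -- ball inside Q, lattice points of Q* finite
  obtain ⟨r₂, hr₂, hball₂⟩ : ∃ r > 0, Metric.ball (0 : Fin d → ℝ) r ⊆ Q := by
    rw [mem_interior_iff_mem_nhds, Metric.mem_nhds_iff] at hintQ
    obtain ⟨ε, hε, h⟩ := hintQ
    exact ⟨ε, hε, h⟩
  have hUfin : {n : Fin d → ℤ | toR n ∈ polarSet Q}.Finite :=
    finite_lattice_of_bound (polar_bound hr₂ hball₂)
  set U : Finset (Fin d → ℤ) := hUfin.toFinset with hUdef
  have hR : R = convexHull ℝ (toR '' (U : Set (Fin d → ℤ))) := by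
    rw [hRdef, latticeHull_eq]
    congr 1
    rw [hUdef, Set.Finite.coe_toFinset]
  have hUne : U.Nonempty := by
    refine ⟨0, ?_⟩
    rw [hUdef, Set.Finite.mem_toFinset]
    show toR 0 ∈ polarSet Q
    rw [toR_zero]
    exact zero_mem_polarSet Q
  have hRpoly : IsLatticePolytope R := ⟨U, hR⟩
  -- Δ ⊆ R
  have hΔR : Δ ⊆ R := by
    rw [hS, hRdef]
    apply convexHull_min ?_ (convex_latticeHull _)
    rintro x ⟨s, hs, rfl⟩
    apply subset_convexHull ℝ _
    refine ⟨?_, isLatticePoint_toR s⟩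
    intro z hz
    have : Q ⊆ {z | -1 ≤ pairR z (toR s)} := by
      rw [hQdef]
      apply convexHull_min ?_ (convex_pair_ge (toR s) (-1))
      rintro w ⟨hw, _⟩
      have : -1 ≤ pairR (toR s) w := hw _ (hS ▸ subset_convexHull ℝ _ ⟨s, hs, rfl⟩)
      rwa [pairR_comm] at this
    exact this hz
  -- R ⊆ Q*
  have hRsub : R ⊆ polarSet Q := latticeHull_subset (convex_polarSet Q)
  -- [R*] = Q
  have hRQ : latticeHull (polarSet R) = Q := by
    apply Set.Subset.antisymm
    · exact latticeHull_mono (polarSet_antitone hΔR)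
    · rw [hQdef]
      apply convexHull_mono
      rintro g ⟨hg, hglat⟩
      refine ⟨?_, hglat⟩
      intro x hx
      have hgQ : g ∈ Q := subset_convexHull ℝ _ ⟨hg, hglat⟩
      have := hRsub hx _ hgQ
      rwa [pairR_comm]
  have hfix : R = latticeHull (polarSet (latticeHull (polarSet R))) := by
    rw [hRQ]
  -- Fine interior of R is {0}
  have hFIR : fineInterior R = {0} := by
    apply Set.Subset.antisymm
    · intro x hx
      -- positivity against lattice points of Δ*
      have hx_nonneg : ∀ z ∈ Q, 0 ≤ pairR x z := by
        rw [hQdef]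
        intro z hz
        have : latticeHull (polarSet Δ) ⊆ {z | 0 ≤ pairR x z} := by
          apply convexHull_min ?_ (convex_pair_ge' x 0)
          rintro w ⟨hw, hwlat⟩
          obtain ⟨n, rfl⟩ := isLatticePoint_iff.mp hwlat
          rcases eq_or_ne n 0 with rfl | hn0
          · refine Set.mem_setOf.mpr ?_
            rw [toR_zero, pairR_zero_right]
          · refine Set.mem_setOf.mpr ?_
            have hordR : -1 ≤ ordP R (toR n) := by
              rw [hR]
              apply le_ordP_hull hUne
              intro u hu
              have huQ : toR u ∈ polarSet Q := by
                rw [hUdef] at hu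
                exact (Set.Finite.mem_toFinset hUfin).mp hu
              have := huQ _ (hlatQ n hw)
              rwa [pairR_comm]
            have := hx n hn0
            linarith
        exact this hz
      -- shrink x into -Q and conclude x = 0
      rcases eq_or_ne x 0 with rfl | hx0
      · rfl
      · exfalso
        set c₂ : ℝ := r₂ / (2 * (∑ i, |x i| + 1)) with hc₂def
        have hsum0 : (0:ℝ) ≤ ∑ i, |x i| := Finset.sum_nonneg fun i _ => abs_nonneg _
        have hc₂ : 0 < c₂ := by positivity
        have hmem : (-c₂) • x ∈ Q := by
          apply hball₂
          rw [mem_ball_zero_iff]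
          rcases eq_or_ne d 0 with hd | hd
          · exfalso; exact hx0 (funext fun i => absurd i.2 (by omega))
          · have : Nonempty (Fin d) := ⟨⟨0, Nat.pos_of_ne_zero hd⟩⟩
            apply lt_of_le_of_lt
              ((pi_norm_le_iff_of_nonneg (by positivity : (0:ℝ) ≤ r₂/2)).mpr ?_) (by linarith)
            intro i
            have h1 : |x i| ≤ ∑ j, |x j| :=
              Finset.single_le_sum (fun j _ => abs_nonneg (x j)) (Finset.mem_univ i)
            have : ‖((-c₂) • x) i‖ = c₂ * |x i| := by
              simp [abs_mul, abs_of_pos hc₂]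
            rw [this, hc₂def]
            rw [div_mul_eq_mul_div, div_le_div_iff₀ (by positivity) (by norm_num : (0:ℝ) < 2)]
            nlinarith
        have := hx_nonneg _ hmem
        rw [pairR_smul_right] at this
        have hxx : pairR x x ≤ 0 := by nlinarith [pairR_self_nonneg x]
        exact hx0 (eq_zero_of_pairR_self hxx)
    · intro x hx
      rw [Set.mem_singleton_iff] at hx
      subst hx
      intro n hn
      rw [pairR_zero_left]
      obtain ⟨s₀, hs₀, hatt⟩ : ∃ s₀ ∈ S, ordP Δ (toR n) = pairR (toR s₀) (toR n) := by
        rw [hS]; exact ordP_hull_attained hSne (toR n)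
      have h1 : ordP R (toR n) ≤ pairR (toR s₀) (toR n) := by
        rw [hR]
        apply ordP_hull_le hUne _ (toR n)
        rw [← hR]
        exact hΔR (hS ▸ subset_convexHull ℝ _ ⟨s₀, hs₀, rfl⟩)
      have h2' := hord n hn
      rw [hatt] at h2'
      linarith
  -- minimality
  have hmin : ∀ Δ' : Set (Fin d → ℝ),
      (IsLatticePolytope Δ' ∧ fineInterior Δ' = {0} ∧
        Δ' = latticeHull (polarSet (latticeHull (polarSet Δ')))) → Δ ⊆ Δ' → R ⊆ Δ' := by
    intro Δ' hΔ' hsub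
    have step : R ⊆ latticeHull (polarSet (latticeHull (polarSet Δ'))) := by
      rw [hRdef, hQdef]
      exact latticeHull_mono (polarSet_antitone (latticeHull_mono (polarSet_antitone hsub)))
    rw [← hΔ'.2.2] at step
    exact step
  exact ⟨⟨hRpoly, hFIR, hfix⟩, hΔR, hmin⟩

end AuxLemmas

/-- if Δ^{FI} = {0}, then [[Δ*]*] is the smallest pseudoreflexive
polytope containing Δ. -/
theorem stmt7 {d : ℕ} (Δ : Set (Fin d → ℝ)) (h1 : IsLatticePolytope Δ)
    (h2 : (interior Δ).Nonempty) (hFI : fineInterior Δ = {0}) :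
    IsPseudoreflexive (latticeHull (polarSet (latticeHull (polarSet Δ)))) ∧
      Δ ⊆ latticeHull (polarSet (latticeHull (polarSet Δ))) ∧
      ∀ Δ' : Set (Fin d → ℝ), IsPseudoreflexive Δ' → Δ ⊆ Δ' →
        latticeHull (polarSet (latticeHull (polarSet Δ))) ⊆ Δ' := by
  obtain ⟨a, b, c⟩ := stmt7' Δ h1 h2 hFI
  exact ⟨a, b, fun Δ' h h' => c Δ' h h'⟩
end
end

section
/- For integers a ≥ 2, b ≥ 2 and d = ab + 1, the two expressions a − 1/a + (−1)^{d−2} Σ_{i=0}^{d−2} (−1)^i C(d,i)(a+d)^{d−1−i} + (−1)^{d−1} Σ_{i=0}^{d−1} (−1)^i C(d,i)(a+d)^{d−i}/a and (−1)^{d−1}[(−1)^{d−1}(a − 1/a) − Σ_{i=1}^{d−2} (−1)^i C(d,i)(a+d)^{d−i−1} + Σ_{i=2}^{d−1} (−1)^i C(d,i)(a+d)^{d−i}/a] are equal as rational numbers. -/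
open Finset Pointwise MeasureTheory
noncomputable section

variable {d : ℕ}

/-- the mirror symmetry identity e_str(X) = (-1)^{d-1} e_str(X^∨)
for d = ab+1, as an identity of rational numbers. -/
theorem stmt17 (a b d : ℕ) (ha : 2 ≤ a) (hb : 2 ≤ b) (hd : d = a * b + 1) :
    (a : ℚ) - 1 / a +
        (-1 : ℚ) ^ (d - 2) * (∑ i ∈ Finset.range (d - 1),
          (-1 : ℚ) ^ i * (d.choose i) * ((a : ℚ) + d) ^ (d - 1 - i)) +
        (-1 : ℚ) ^ (d - 1) * (∑ i ∈ Finset.range d,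
          (-1 : ℚ) ^ i * (d.choose i) * ((a : ℚ) + d) ^ (d - i) / a) =
      (-1 : ℚ) ^ (d - 1) *
        ((-1 : ℚ) ^ (d - 1) * ((a : ℚ) - 1 / a) -
          (∑ i ∈ Finset.Icc 1 (d - 2),
            (-1 : ℚ) ^ i * (d.choose i) * ((a : ℚ) + d) ^ (d - i - 1)) +
          (∑ i ∈ Finset.Icc 2 (d - 1),
            (-1 : ℚ) ^ i * (d.choose i) * ((a : ℚ) + d) ^ (d - i) / a)) := by
  have h4 : 4 ≤ a * b := Nat.mul_le_mul ha hb
  have hd5 : 5 ≤ d := by omega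
  have ha0 : (a : ℚ) ≠ 0 := by positivity
  set x : ℚ := (a : ℚ) + d with hxdef
  have e1 : Finset.range (d - 1) = insert 0 (Finset.Icc 1 (d - 2)) := by
    ext i; simp only [Finset.mem_range, Finset.mem_insert, Finset.mem_Icc]; omega
  have e2 : Finset.range d = insert 0 (insert 1 (Finset.Icc 2 (d - 1))) := by
    ext i; simp only [Finset.mem_range, Finset.mem_insert, Finset.mem_Icc]; omega
  have ee : ∀ i ∈ Finset.Icc 1 (d - 2),
      (-1 : ℚ) ^ i * (d.choose i) * x ^ (d - 1 - i)
        = (-1 : ℚ) ^ i * (d.choose i) * x ^ (d - i - 1) := by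
    intro i _
    rw [show d - 1 - i = d - i - 1 from by omega]
  rw [e1, Finset.sum_insert (by simp), e2, Finset.sum_insert (by simp),
    Finset.sum_insert (by simp), Finset.sum_congr rfl ee]
  set S : ℚ := ∑ i ∈ Finset.Icc 1 (d - 2), (-1 : ℚ) ^ i * (d.choose i) * x ^ (d - i - 1)
  set T : ℚ := ∑ i ∈ Finset.Icc 2 (d - 1), (-1 : ℚ) ^ i * (d.choose i) * x ^ (d - i) / a
  have hx1 : x ^ (d - 0) = x ^ (d - 1) * x := by
    rw [show d - 0 = (d - 1) + 1 from by omega, pow_succ]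
  have hs : d - 1 = (d - 2) + 1 := by omega
  simp only [pow_zero, pow_one, Nat.choose_zero_right, Nat.choose_one_right,
    Nat.sub_zero, Nat.cast_one, one_mul, hs, pow_succ]
  have hxd : x ^ d = x ^ (d - 2) * x * x := by
    rw [← pow_succ, ← pow_succ]; congr 1; omega
  rw [hxd]
  rcases Nat.even_or_odd (d - 2) with h | h
  · rw [h.neg_one_pow]
    field_simp
    ring
  · rw [h.neg_one_pow]
    field_simp
    ring
end
end
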